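/- arXiv:2412.16327 — 3 statements merged into one kernel-verified Lean document; each statement's English description precedes it below -/
import Mathlib

section
/- Let a, b ≥ 0 with a + b = 1 and let C₁, C₂ ≥ 0. Then min(3·C₂, 3·C₁ + (11/8)·b·C₂) ≤ (9 / ((11/8)·b² − (11/8)·b + 3)) · (a·C₁ + b·C₂). -/
/-! The minimum of two numbers is at most any weighted average of them. With the weights
`b (3 - k a)` and `3 a`, which add up to the denominator `k b² - k b + 3` when `a + b = 1`,
the weighted average of `3 C₂` and `3 C₁ + k b C₂` is exactly `9 (a C₁ + b C₂)`. -/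

theorem min_mul_add_le {α : Type*} [CommSemiring α] [LinearOrder α] [IsOrderedRing α]
    {x y p q : α} (hp : 0 ≤ p) (hq : 0 ≤ q) :
    min x y * (p + q) ≤ p * x + q * y := by
  rw [mul_add, mul_comm _ p, mul_comm _ q]
  exact add_le_add (mul_le_mul_of_nonneg_left (min_le_left x y) hp)
    (mul_le_mul_of_nonneg_left (min_le_right x y) hq)

theorem min_le_div_mul_of_add_eq_one {a b k C₁ C₂ : ℝ} (ha : 0 ≤ a) (hb : 0 ≤ b)
    (hab : a + b = 1) (hk : k ≤ 3) :
    min (3 * C₂) (3 * C₁ + k * b * C₂) ≤ (9 / (k * b ^ 2 - k * b + 3)) * (a * C₁ + b * C₂) := by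
  have hka : k * a ≤ 3 := by nlinarith
  have hweight : 0 ≤ b * (3 - k * a) := mul_nonneg hb (by linarith)
  have hdenom : k * b ^ 2 - k * b + 3 = b * (3 - k * a) + 3 * a := by
    linear_combination (k * b - 3) * hab
  have hdenom_pos : 0 < b * (3 - k * a) + 3 * a := by nlinarith
  rw [hdenom, div_mul_eq_mul_div, le_div_iff₀ hdenom_pos]
  calc min (3 * C₂) (3 * C₁ + k * b * C₂) * (b * (3 - k * a) + 3 * a)
      ≤ b * (3 - k * a) * (3 * C₂) + 3 * a * (3 * C₁ + k * b * C₂) :=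
        min_mul_add_le hweight (by positivity)
    _ = 9 * (a * C₁ + b * C₂) := by ring

theorem msr_bipoint_averaging_general (a b C₁ C₂ : ℝ) (ha : 0 ≤ a) (hb : 0 ≤ b)
    (hab : a + b = 1) :
    min (3 * C₂) (3 * C₁ + (11/8) * b * C₂) ≤
      (9 / ((11/8) * b^2 - (11/8) * b + 3)) * (a * C₁ + b * C₂) :=
  min_le_div_mul_of_add_eq_one ha hb hab (by norm_num)

theorem msr_bipoint_averaging (a b C₁ C₂ : ℝ) (ha : 0 ≤ a) (hb : 0 ≤ b)
    (hab : a + b = 1) (hC₁ : 0 ≤ C₁) (hC₂ : 0 ≤ C₂) :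
    min (3 * C₂) (3 * C₁ + (11/8) * b * C₂) ≤
      (9 / ((11/8) * b^2 - (11/8) * b + 3)) * (a * C₁ + b * C₂) :=
  msr_bipoint_averaging_general a b C₁ C₂ ha hb hab
end

section
/- Let a, b ≥ 0 with a + b = 1 and let C₁, C₂ ≥ 0. Then min(6·C₂, 6·C₁ + 2·b·C₂) ≤ (36 / (2·b² − 2·b + 6)) · (a·C₁ + b·C₂), and 36 / (2·b² − 2·b + 6) ≤ 72/11 for all b ∈ [0,1]. -/
/-! With `D = 2b² - 2b + 6` and `t = 6a / D`, the right-hand side of the bound is exactly the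
convex combination `(1 - t) · 6C₂ + t · (6C₁ + 2bC₂)`, which dominates the minimum. The weight
`t` lies in `[0, 1]` because `6a = 6 - 6b ≤ D` when `b ≥ 0`, and `D = (2b - 1)² / 2 + 11/2`. -/

lemma eleven_div_two_le_two_mul_sq_sub_two_mul_add_six (b : ℝ) :
    11 / 2 ≤ 2 * b ^ 2 - 2 * b + 6 := by
  nlinarith [sq_nonneg (2 * b - 1)]

theorem msd_bipoint_averaging_general (a b C₁ C₂ : ℝ) (ha : 0 ≤ a) (hb : 0 ≤ b)
    (hab : a + b = 1) :
    min (6 * C₂) (6 * C₁ + 2 * b * C₂) ≤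
      (36 / (2 * b^2 - 2 * b + 6)) * (a * C₁ + b * C₂) ∧
    36 / (2 * b^2 - 2 * b + 6) ≤ 72/11 := by
  obtain rfl : a = 1 - b := eq_sub_of_add_eq hab
  set D := 2 * b ^ 2 - 2 * b + 6 with hD
  have hD_ge : 11 / 2 ≤ D := eleven_div_two_le_two_mul_sq_sub_two_mul_add_six b
  have hD_pos : 0 < D := by linarith
  have h_weight_le_one : 6 * (1 - b) / D ≤ 1 := by
    rw [div_le_one hD_pos]
    nlinarith
  refine ⟨?_, ?_⟩
  · calc min (6 * C₂) (6 * C₁ + 2 * b * C₂)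
        ≤ (1 - 6 * (1 - b) / D) • (6 * C₂) + (6 * (1 - b) / D) • (6 * C₁ + 2 * b * C₂) :=
          Convex.min_le_combo _ _ (sub_nonneg.mpr h_weight_le_one) (div_nonneg (by linarith) hD_pos.le) (by ring)
      _ = 36 / D * ((1 - b) * C₁ + b * C₂) := by
          rw [smul_eq_mul, smul_eq_mul]
          field_simp
          rw [hD]
          ring
  · calc 36 / D ≤ 36 / (11 / 2) := div_le_div_of_nonneg_left (by norm_num) (by norm_num) hD_ge
      _ = 72 / 11 := by norm_num

theorem msd_bipoint_averaging (a b C₁ C₂ : ℝ) (ha : 0 ≤ a) (hb : 0 ≤ b)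
    (hab : a + b = 1) (hC₁ : 0 ≤ C₁) (hC₂ : 0 ≤ C₂) :
    min (6 * C₂) (6 * C₁ + 2 * b * C₂) ≤
      (36 / (2 * b^2 - 2 * b + 6)) * (a * C₁ + b * C₂) ∧
    36 / (2 * b^2 - 2 * b + 6) ≤ 72/11 :=
  msd_bipoint_averaging_general a b C₁ C₂ ha hb hab
end

section
/- Let R₁, R₂, R₃ ≥ 0 with R₃ ≤ R₂. Then min(R₁ + 4·R₂, max(3·R₂, 2·R₁ + R₂ + 4·R₃), max(4·R₂, 2·R₁ + 4·R₃)) ≤ (11/8)·R₁ + 3·(R₂ + R₃). -/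
theorem group_center_choice_general (R₁ R₂ R₃ : ℝ) (h1 : 0 ≤ R₁)
    (h3 : 0 ≤ R₃) :
    min (R₁ + 4 * R₂)
      (min (max (3 * R₂) (2 * R₁ + R₂ + 4 * R₃))
           (max (4 * R₂) (2 * R₁ + 4 * R₃))) ≤
    (11/8) * R₁ + 3 * (R₂ + R₃) := by
  -- Centering at i₂ suffices exactly when `5/8 R₁ + R₃ ≤ 2 R₂`; otherwise centering at i₁ does.
  rcases le_or_gt (5/8 * R₁ + R₃) (2 * R₂) with h_center_i₂ | h_center_i₁
  · exact (min_le_right _ _).trans <| (min_le_left _ _).trans <| max_le (by linarith) (by linarith)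
  · exact (min_le_left _ _).trans (by linarith)

theorem group_center_choice (R₁ R₂ R₃ : ℝ) (h1 : 0 ≤ R₁) (h2 : 0 ≤ R₂)
    (h3 : 0 ≤ R₃) (h4 : R₃ ≤ R₂) :
    min (R₁ + 4 * R₂)
      (min (max (3 * R₂) (2 * R₁ + R₂ + 4 * R₃))
           (max (4 * R₂) (2 * R₁ + 4 * R₃))) ≤
    (11/8) * R₁ + 3 * (R₂ + R₃) :=
  group_center_choice_general R₁ R₂ R₃ h1 h3
end
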